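/- Given a recollement (S, T, U) and a Serre functor F on T with quasi-inverse F', the functor i_? := F ∘ i_* ∘ i^* ∘ F' ∘ i_* : S → T is right adjoint to i^! : T → S. -/

import Mathlib

/-!
Setting: `k` a field; `S`, `T`, `U` skeletally small `k`-linear triangulated categories
with finite-dimensional Hom-spaces, `T` with split idempotents.  A recollement
`(S, T, U)` as in [BBD], and (right/left) Serre functors in the sense of
Reiten–Van den Bergh.
-/

open CategoryTheory CategoryTheory.Limits CategoryTheory.Pretriangulated

universe v₁ v₂ v₃ u₁ u₂ u₃ u₄

/-- A right Serre structure on an endofunctor `F` of a `k`-linear category `C`: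
isomorphisms `C(X, Y) ≅ C(Y, F X)^∨`, natural in `X` and `Y`.
A right Serre functor is a functor `F` equipped with such a structure. -/
structure RightSerreStructure (k : Type u₄) [Field k] (C : Type u₁) [Category.{v₁} C]
    [Preadditive C] [CategoryTheory.Linear k C] (F : C ⥤ C) where
  equiv : ∀ X Y : C, (X ⟶ Y) ≃ₗ[k] Module.Dual k (Y ⟶ F.obj X)
  naturality_left : ∀ {X X' Y : C} (f : X' ⟶ X) (φ : X ⟶ Y) (u : Y ⟶ F.obj X'),
    equiv X' Y (f ≫ φ) u = equiv X Y φ (u ≫ F.map f)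
  naturality_right : ∀ {X Y Y' : C} (φ : X ⟶ Y) (g : Y ⟶ Y') (u : Y' ⟶ F.obj X),
    equiv X Y' (φ ≫ g) u = equiv X Y φ (g ≫ u)

/-- A left Serre structure on an endofunctor `F'` of a `k`-linear category `C`:
isomorphisms `C(X, Y) ≅ C(F' Y, X)^∨`, natural in `X` and `Y`.
A left Serre functor is a functor `F'` equipped with such a structure. -/
structure LeftSerreStructure (k : Type u₄) [Field k] (C : Type u₁) [Category.{v₁} C]
    [Preadditive C] [CategoryTheory.Linear k C] (F' : C ⥤ C) where
  equiv : ∀ X Y : C, (X ⟶ Y) ≃ₗ[k] Module.Dual k (F'.obj Y ⟶ X)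
  naturality_left : ∀ {X X' Y : C} (f : X' ⟶ X) (φ : X ⟶ Y) (u : F'.obj Y ⟶ X'),
    equiv X' Y (f ≫ φ) u = equiv X Y φ (u ≫ f)
  naturality_right : ∀ {X Y Y' : C} (φ : X ⟶ Y) (g : Y ⟶ Y') (u : F'.obj Y' ⟶ X),
    equiv X Y' (φ ≫ g) u = equiv X Y φ (F'.map g ≫ u)

/-- A Serre functor: an essentially surjective right Serre functor. -/
structure SerreFunctor (k : Type u₄) [Field k] (C : Type u₁) [Category.{v₁} C]
    [Preadditive C] [CategoryTheory.Linear k C] where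
  F : C ⥤ C
  rightSerre : RightSerreStructure k C F
  essSurj : F.EssSurj

/-- A recollement of triangulated categories `(S, T, U)`:
triangulated functors `i_* = iSt : S ⥤ T`, `i^* = iUp, i^! = iSh : T ⥤ S`,
`j^* = jUp : T ⥤ U`, `j_! = jLo, j_* = jSt : U ⥤ T` with the adjunctions,
vanishing, full faithfulness and distinguished-triangle conditions of [BBD, sec. 1.4]. -/
structure Recollement (S : Type u₁) (T : Type u₂) (U : Type u₃)
    [Category.{v₁} S] [Category.{v₂} T] [Category.{v₃} U]
    [HasZeroObject S] [HasZeroObject T] [HasZeroObject U]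
    [Preadditive S] [Preadditive T] [Preadditive U]
    [HasShift S ℤ] [HasShift T ℤ] [HasShift U ℤ]
    [∀ n : ℤ, (shiftFunctor S n).Additive] [∀ n : ℤ, (shiftFunctor T n).Additive]
    [∀ n : ℤ, (shiftFunctor U n).Additive]
    [Pretriangulated S] [Pretriangulated T] [Pretriangulated U] where
  /-- `i_* : S ⥤ T` -/
  iSt : S ⥤ T
  /-- `i^* : T ⥤ S` -/
  iUp : T ⥤ S
  /-- `i^! : T ⥤ S` -/
  iSh : T ⥤ S
  /-- `j^* : T ⥤ U` -/
  jUp : T ⥤ U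
  /-- `j_! : U ⥤ T` -/
  jLo : U ⥤ T
  /-- `j_* : U ⥤ T` -/
  jSt : U ⥤ T
  [commShift_iSt : iSt.CommShift ℤ]
  [commShift_iUp : iUp.CommShift ℤ]
  [commShift_iSh : iSh.CommShift ℤ]
  [commShift_jUp : jUp.CommShift ℤ]
  [commShift_jLo : jLo.CommShift ℤ]
  [commShift_jSt : jSt.CommShift ℤ]
  [isTriangulated_iSt : iSt.IsTriangulated]
  [isTriangulated_iUp : iUp.IsTriangulated]
  [isTriangulated_iSh : iSh.IsTriangulated]
  [isTriangulated_jUp : jUp.IsTriangulated]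
  [isTriangulated_jLo : jLo.IsTriangulated]
  [isTriangulated_jSt : jSt.IsTriangulated]
  /-- `(i^*, i_*)` is an adjoint pair. -/
  adj₁ : iUp ⊣ iSt
  /-- `(i_*, i^!)` is an adjoint pair. -/
  adj₂ : iSt ⊣ iSh
  /-- `(j_!, j^*)` is an adjoint pair. -/
  adj₃ : jLo ⊣ jUp
  /-- `(j^*, j_*)` is an adjoint pair. -/
  adj₄ : jUp ⊣ jSt
  /-- `j^* ∘ i_* = 0`. -/
  zero_comp : ∀ X : S, IsZero (jUp.obj (iSt.obj X))
  fullyFaithful_iSt : iSt.FullyFaithful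
  fullyFaithful_jLo : jLo.FullyFaithful
  fullyFaithful_jSt : jSt.FullyFaithful
  /-- The distinguished triangle `i_* i^! X ⟶ X ⟶ j_* j^* X ⟶`, whose morphisms into and
  out of `X` are the counit of `(i_*, i^!)` and the unit of `(j^*, j_*)`. -/
  triangle_a : ∀ X : T, ∃ δ : jSt.obj (jUp.obj X) ⟶ (iSt.obj (iSh.obj X))⟦(1 : ℤ)⟧,
    Triangle.mk (adj₂.counit.app X) (adj₄.unit.app X) δ ∈ distTriang T
  /-- The distinguished triangle `j_! j^* X ⟶ X ⟶ i_* i^* X ⟶`, whose morphisms into and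
  out of `X` are the counit of `(j_!, j^*)` and the unit of `(i^*, i_*)`. -/
  triangle_b : ∀ X : T, ∃ δ : iSt.obj (iUp.obj X) ⟶ (jLo.obj (jUp.obj X))⟦(1 : ℤ)⟧,
    Triangle.mk (adj₃.counit.app X) (adj₁.unit.app X) δ ∈ distTriang T

/-!
Since `i^* ⊣ i_* ⊣ i^!`, the endofunctor `i_* i^!` of `T` has the left adjoint `i_* i^*`, and
Serre duality then gives it a right adjoint as well:
`T(i_* i^! X, W) ≅ T(F' W, i_* i^! X)^∨ ≅ T(i_* i^* F' W, X)^∨ ≅ T(X, F i_* i^* F' W)`.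
Dualizing the middle bijection needs it to be `k`-linear, which holds because `i_* i^!` is a
coreflector onto the image of the fully faithful `i_*`. Taking `W = i_* Y` and using once more
that `i_*` is fully faithful gives `S(i^! X, Y) ≅ T(X, F i_* i^* F' i_* Y)`.
-/

namespace RightSerreStructure

variable {k : Type u₄} [Field k] {C : Type u₁} [Category.{v₁} C] [Preadditive C]
  [CategoryTheory.Linear k C] [∀ X Y : C, FiniteDimensional k (X ⟶ Y)] {F : C ⥤ C}
  (σ : RightSerreStructure k C F)

noncomputable def dualEquiv (X Y : C) : (Y ⟶ F.obj X) ≃ₗ[k] Module.Dual k (X ⟶ Y) :=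
  (Module.evalEquiv k (Y ⟶ F.obj X)).trans (σ.equiv X Y).dualMap

lemma hom_ext {X Y : C} {u v : Y ⟶ F.obj X}
    (h : ∀ φ : X ⟶ Y, σ.equiv X Y φ u = σ.equiv X Y φ v) : u = v :=
  (σ.dualEquiv X Y).injective (LinearMap.ext h)

@[simp]
lemma dualEquiv_apply (X Y : C) (u : Y ⟶ F.obj X) (φ : X ⟶ Y) :
    σ.dualEquiv X Y u φ = σ.equiv X Y φ u :=
  rfl

end RightSerreStructure

namespace CategoryTheory.Adjunction

section Linear

variable (k : Type u₄) [Semiring k] {C : Type u₁} {D : Type u₂} [Category.{v₁} C]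
  [Category.{v₂} D] [Preadditive C] [Preadditive D] [CategoryTheory.Linear k C]
  [CategoryTheory.Linear k D] {L : C ⥤ D} {M : D ⥤ C} (adj : L ⊣ M) [L.Additive] [M.Linear k]

def homLinearEquiv (X : C) (Y : D) : (L.obj X ⟶ Y) ≃ₗ[k] (X ⟶ M.obj Y) :=
  { adj.homAddEquiv X Y with
    map_smul' r f := by
      simp [homEquiv_unit, Functor.map_smul] }

@[simp]
lemma homLinearEquiv_apply (X : C) (Y : D) (f : L.obj X ⟶ Y) :
    adj.homLinearEquiv k X Y f = adj.homEquiv X Y f :=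
  rfl

end Linear

variable {C : Type u₁} {D : Type u₂} [Category.{v₁} C] [Category.{v₂} D]
  {G : D ⥤ C} {M : C ⥤ D}

lemma comp_counit_injective (adj : G ⊣ M) [G.Full] {V : D} {Y : C}
    {t₁ t₂ : G.obj V ⟶ G.obj (M.obj Y)}
    (h : t₁ ≫ adj.counit.app Y = t₂ ≫ adj.counit.app Y) : t₁ = t₂ := by
  obtain ⟨s₁, rfl⟩ := G.map_surjective t₁
  obtain ⟨s₂, rfl⟩ := G.map_surjective t₂
  have h' : (adj.homEquiv V Y).symm s₁ = (adj.homEquiv V Y).symm s₂ := by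
    simpa only [homEquiv_counit] using h
  rw [(adj.homEquiv V Y).symm.injective h']

/-- `G (M f)` is the unique lift of `ε ≫ f` through the counit `ε`. -/
lemma linear_comp_of_full (adj : G ⊣ M) (k : Type u₄) [Semiring k] [Preadditive C]
    [CategoryTheory.Linear k C] [G.Full] : (M ⋙ G).Linear k where
  map_smul {X Y} f r := adj.comp_counit_injective <| by
    have naturality_smul := adj.counit_naturality (r • f)
    have naturality := adj.counit_naturality f
    rw [Functor.comp_map, Functor.comp_map, naturality_smul, Linear.smul_comp, naturality,
      Linear.comp_smul]

section Serre

variable {k : Type u₄} [Field k] {C : Type u₁} {D : Type u₂} [Category.{v₁} C]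
  [Category.{v₂} D] [Preadditive C] [Preadditive D] [CategoryTheory.Linear k C]
  [CategoryTheory.Linear k D] [∀ X Y : C, FiniteDimensional k (X ⟶ Y)]
  [∀ X Y : D, FiniteDimensional k (X ⟶ Y)] {F_C : C ⥤ C} {F_D : D ⥤ D}
  (σC : RightSerreStructure k C F_C) (σD : RightSerreStructure k D F_D)
  {F' : D ⥤ D} (ε : F' ⋙ F_D ≅ 𝟭 D) {L : D ⥤ C} {M : C ⥤ D} (adj : L ⊣ M)
  [L.Additive] [M.Linear k]

noncomputable def serreHomEquiv (X : C) (W : D) :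
    (M.obj X ⟶ W) ≃ (X ⟶ F_C.obj (L.obj (F'.obj W))) :=
  ((Iso.homCongr (Iso.refl _) (ε.app W).symm).trans (σD.dualEquiv _ _).toEquiv).trans
    ((adj.homLinearEquiv k _ _).dualMap.trans (σC.dualEquiv _ _).symm).toEquiv

lemma equiv_serreHomEquiv {X : C} {W : D} (u : M.obj X ⟶ W) (a : L.obj (F'.obj W) ⟶ X) :
    σC.equiv _ X a (adj.serreHomEquiv σC σD ε X W u)
      = σD.equiv _ _ (adj.homEquiv _ _ a) (u ≫ ε.inv.app W) := by
  rw [← RightSerreStructure.dualEquiv_apply]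
  simp [serreHomEquiv]

lemma serreHomEquiv_naturality_left {X' X : C} {W : D} (f : X' ⟶ X) (u : M.obj X ⟶ W) :
    adj.serreHomEquiv σC σD ε X' W (M.map f ≫ u) = f ≫ adj.serreHomEquiv σC σD ε X W u :=
  σC.hom_ext fun a => by
    rw [← σC.naturality_right, equiv_serreHomEquiv, equiv_serreHomEquiv,
      homEquiv_naturality_right, σD.naturality_right, Category.assoc]

lemma serreHomEquiv_naturality_right {X : C} {W W' : D} (u : M.obj X ⟶ W) (g : W ⟶ W') :
    adj.serreHomEquiv σC σD ε X W' (u ≫ g)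
      = adj.serreHomEquiv σC σD ε X W u ≫ F_C.map (L.map (F'.map g)) :=
  σC.hom_ext fun a => by
    rw [← σC.naturality_left, equiv_serreHomEquiv, equiv_serreHomEquiv,
      homEquiv_naturality_left, σD.naturality_left, Category.assoc, Category.assoc]
    congr 2
    exact ε.inv.naturality g

noncomputable def ofSerre : M ⊣ F' ⋙ L ⋙ F_C :=
  mkOfHomEquiv
    { homEquiv := adj.serreHomEquiv σC σD ε
      homEquiv_naturality_left_symm f g := (adj.serreHomEquiv σC σD ε _ _).injective <| by
        rw [serreHomEquiv_naturality_left, Equiv.apply_symm_apply, Equiv.apply_symm_apply]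
      homEquiv_naturality_right := adj.serreHomEquiv_naturality_right σC σD ε }

end Serre

end CategoryTheory.Adjunction

/-- Given a recollement `(S, T, U)` and a Serre functor `F` on `T` with quasi-inverse `F'`,
the functor `i_? := F ∘ i_* ∘ i^* ∘ F' ∘ i_* : S ⥤ T` is right adjoint to `i^! : T ⥤ S`. -/
theorem recollement_right_adjoint_of_iSh
    {k : Type u₄} [Field k]
    {S : Type u₁} {T : Type u₂} {U : Type u₃}
    [Category.{v₁} S] [Category.{v₂} T] [Category.{v₃} U]
    [HasZeroObject S] [HasZeroObject T] [HasZeroObject U]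
    [Preadditive S] [Preadditive T] [Preadditive U]
    [CategoryTheory.Linear k S] [CategoryTheory.Linear k T] [CategoryTheory.Linear k U]
    [HasShift S ℤ] [HasShift T ℤ] [HasShift U ℤ]
    [∀ n : ℤ, (shiftFunctor S n).Additive] [∀ n : ℤ, (shiftFunctor T n).Additive]
    [∀ n : ℤ, (shiftFunctor U n).Additive]
    [Pretriangulated S] [Pretriangulated T] [Pretriangulated U]
    [EssentiallySmall.{v₁} S] [EssentiallySmall.{v₂} T] [EssentiallySmall.{v₃} U]
    [∀ X Y : S, FiniteDimensional k (X ⟶ Y)]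
    [∀ X Y : T, FiniteDimensional k (X ⟶ Y)]
    [∀ X Y : U, FiniteDimensional k (X ⟶ Y)]
    [IsIdempotentComplete T]
    (R : Recollement S T U)
    (SF : SerreFunctor k T) (F' : T ⥤ T)
    (η : SF.F ⋙ F' ≅ 𝟭 T) (ε : F' ⋙ SF.F ≅ 𝟭 T) :
    Nonempty (R.iSh ⊣ (R.iSt ⋙ F' ⋙ R.iUp ⋙ R.iSt ⋙ SF.F)) := by
  -- `ofSerre` needs `i_* i^*` additive, which holds as its factors are triangulated
  let := R.commShift_iUp
  let := R.commShift_iSt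
  have := R.isTriangulated_iUp
  have := R.isTriangulated_iSt
  have := R.fullyFaithful_iSt.full
  have := R.adj₂.linear_comp_of_full k
  have adj := (R.adj₁.comp R.adj₂).ofSerre SF.rightSerre SF.rightSerre ε
  exact ⟨adj.restrictFullyFaithful (L := R.iSh) (Functor.FullyFaithful.id T)
    R.fullyFaithful_iSt (Iso.refl _) (Iso.refl _)⟩
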